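/- arXiv:1301.1182 — 5 statements merged into one kernel-verified Lean document; each statement's English description precedes it below -/
import Mathlib

section
/- Let Φ be ψ-irreducible and let r ∈ Λ. (1) If there exists a set A ∈ B+(X) such that Σ_{n≥1} r(n) P^n(x,A) < ∞ for every x ∈ A, then there exist sets D and A_i, i ≥ 1, such that X = D ∪ (∪_{i≥1} A_i), ψ(D) = 0, and sup_{x∈A_i} Σ_{n≥1} r(n) P^n(x,A_i) < ∞ for every i. (2) If there exists a set A ∈ B+(X) such that sup_{x∈X} Σ_{n≥1} r(n) P^n(x,A) < ∞, then there exist sets A_i, i ≥ 1, with X = ∪_{i≥1} A_i and sup_{x∈X} Σ_{n≥1} r(n) P^n(x,A_i) < ∞ for every i. -/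
open MeasureTheory ProbabilityTheory
open scoped ENNReal NNReal Classical

namespace MarkovTransience

variable {X : Type*} [MeasurableSpace X]

/-- `iterP P n x A` is the `n`-step transition probability `P^n(x, A)`. -/
noncomputable def iterP (P : Kernel X X) : ℕ → X → Set X → ℝ≥0∞
  | 0 => fun x A => A.indicator (fun _ => 1) x
  | n + 1 => fun x A => ∫⁻ y, iterP P n y A ∂(P x)

/-- `retF P A n x` is `F^n(x, A) = P_x(τ_A = n)`, the probability that the first
return to `A` happens at time `n`. -/
noncomputable def retF (P : Kernel X X) (A : Set X) : ℕ → X → ℝ≥0∞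
  | 0 => fun _ => 0
  | 1 => fun x => P x A
  | n + 2 => fun x => ∫⁻ y in Aᶜ, retF P A (n + 1) y ∂(P x)

/-- `retL P A x = L(x, A) = P_x(τ_A < ∞)`. -/
noncomputable def retL (P : Kernel X X) (A : Set X) (x : X) : ℝ≥0∞ :=
  ∑' n, retF P A n x

/-- `retE P A r x = E_x[r(τ_A) 1_{τ_A < ∞}]`. -/
noncomputable def retE (P : Kernel X X) (A : Set X) (r : ℕ → ℝ≥0∞) (x : X) : ℝ≥0∞ :=
  ∑' n, r n * retF P A n x

/-- `hitE P A r x = E_x[r(σ_A) 1_{σ_A < ∞}]`, `σ_A` the first hitting time. -/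
noncomputable def hitE (P : Kernel X X) (A : Set X) (r : ℕ → ℝ≥0∞) (x : X) : ℝ≥0∞ :=
  if x ∈ A then r 0 else retE P A r x

/-- `act P W x = PW(x) = ∫ W(y) P(x, dy)`. -/
noncomputable def act (P : Kernel X X) (W : X → ℝ≥0∞) (x : X) : ℝ≥0∞ :=
  ∫⁻ y, W y ∂(P x)

/-- `ψ`-irreducibility: `ψ` is a nontrivial σ-finite measure such that every set of
positive `ψ`-measure is reached with positive probability from every starting point. -/
def IsIrreducibility (P : Kernel X X) (ψ : Measure X) : Prop :=
  ψ ≠ 0 ∧ SigmaFinite ψ ∧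
    ∀ A : Set X, MeasurableSet A → 0 < ψ A → ∀ x, 0 < ∑' n, iterP P (n + 1) x A

/-- `ψ` is a maximal irreducibility measure for `P`. -/
def IsMaxIrreducibility (P : Kernel X X) (ψ : Measure X) : Prop :=
  IsIrreducibility P ψ ∧ ∀ ψ' : Measure X, IsIrreducibility P ψ' → ψ' ≪ ψ

/-- `A ∈ B⁺(X)`: a measurable set of positive `ψ`-measure. -/
def InBPlus (ψ : Measure X) (A : Set X) : Prop :=
  MeasurableSet A ∧ 0 < ψ A

/-- A petite set. -/
def PetiteSet (P : Kernel X X) (A : Set X) : Prop :=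
  ∃ (a : ℕ → ℝ≥0∞) (ν : Measure X), (∑' n, a n) = 1 ∧ ν ≠ 0 ∧
    ∀ x ∈ A, ∀ B : Set X, MeasurableSet B → ν B ≤ ∑' n, a n * iterP P (n + 1) x B

/-- The chain is transient. -/
def Transient (P : Kernel X X) (ψ : Measure X) : Prop :=
  IsMaxIrreducibility P ψ ∧
    ∃ A : ℕ → Set X, (⋃ i, A i) = Set.univ ∧
      ∀ i, InBPlus ψ (A i) ∧ (⨆ x ∈ A i, ∑' n, iterP P (n + 1) x (A i)) < ⊤

/-- A uniformly geometric transient set. -/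
def UnifGeomTransientSet (P : Kernel X X) (A : Set X) : Prop :=
  ∃ κ : ℝ≥0, 1 < κ ∧ (⨆ x ∈ A, ∑' n, (κ : ℝ≥0∞) ^ (n + 1) * iterP P (n + 1) x A) < ⊤

/-- The chain is geometrically transient. -/
def GeomTransient (P : Kernel X X) (ψ : Measure X) : Prop :=
  IsMaxIrreducibility P ψ ∧
    ∃ (D : Set X) (A : ℕ → Set X), ψ D = 0 ∧ D ∪ (⋃ i, A i) = Set.univ ∧
      ∀ i, InBPlus ψ (A i) ∧ UnifGeomTransientSet P (A i)

/-- A uniformly `ℓ`-transient set. -/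
def UnifAlgTransientSet (P : Kernel X X) (ℓ : ℕ) (A : Set X) : Prop :=
  (⨆ x ∈ A, ∑' n, ((n + 1 : ℕ) : ℝ≥0∞) ^ ℓ * iterP P (n + 1) x A) < ⊤

/-- The chain is algebraically (`ℓ`-)transient. -/
def AlgTransient (P : Kernel X X) (ψ : Measure X) (ℓ : ℕ) : Prop :=
  IsMaxIrreducibility P ψ ∧
    ∃ (D : Set X) (A : ℕ → Set X), ψ D = 0 ∧ D ∪ (⋃ i, A i) = Set.univ ∧
      ∀ i, InBPlus ψ (A i) ∧ UnifAlgTransientSet P ℓ (A i)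

/-- `lifeDist P x n = P_x(τ = n)` where `τ = sup{n : Φ_n ∈ X}` is the lifetime of the
(sub-stochastic) chain, so that `P_x(τ = n) = P^n(x, X) - P^{n+1}(x, X)`. -/
noncomputable def lifeDist (P : Kernel X X) (x : X) (n : ℕ) : ℝ≥0∞ :=
  iterP P n x Set.univ - iterP P (n + 1) x Set.univ

/-- `lifeE P r x = E_x[r(τ)]` for the lifetime `τ` (on the event `τ < ∞`). -/
noncomputable def lifeE (P : Kernel X X) (r : ℕ → ℝ≥0∞) (x : X) : ℝ≥0∞ :=
  ∑' n, r n * lifeDist P x n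

/-- The family `Λ` of normalized increasing submultiplicative rate functions. -/
def InLambda (r : ℕ → ℝ≥0) : Prop :=
  Monotone r ∧ r 0 = 1 ∧ (∀ n, 1 ≤ r n) ∧ ∀ m n, r (m + n) ≤ r m * r n


/-!
Write `G_C(x) = ∑_{n ≥ 1} r(n) Pⁿ(x, C)` (`rPotential`). Since `r` is increasing, `G_C` is
superharmonic for every power of `P`: `∫ G_C dPᵏ(x, ·) ≤ G_C(x)`. If from every point of `T` the
expected number of visits to `C` at times `1, …, j` is at least `1 / j`, Chapman–Kolmogorov gives
`G_T ≤ j² G_C`, and by irreducibility every point lies in such a set `T_j` (`reachSet P C j`)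
once `ψ(C) > 0`. This gives (2) with `C = A`. For (1), first shrink `A` to a `ψ`-positive `C` on
which `G_C` is bounded; superharmonicity then makes `{G_C = ∞}` a `ψ`-null set, and the sets
`{G_C ≤ j} ∩ T_j` cover the rest.
-/

lemma iterP_eq_pow_apply (P : Kernel X X) (n : ℕ) (x : X) {A : Set X} (hA : MeasurableSet A) :
    iterP P n x A = (P ^ n) x A := by
  induction n generalizing x with
  | zero => exact (Measure.dirac_apply' x hA).symm
  | succ n ih =>
    change ∫⁻ y, iterP P n y A ∂(P x) = ((P ^ n) ∘ₖ P) x A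
    rw [Kernel.comp_apply' _ _ _ hA]
    exact lintegral_congr ih

lemma IsIrreducibility.exists_pow_succ_apply_pos {P : Kernel X X} {ψ : Measure X}
    (hψ : IsIrreducibility P ψ) {A : Set X} (hA : MeasurableSet A) (hψA : 0 < ψ A) (x : X) :
    ∃ n, 0 < (P ^ (n + 1)) x A := by
  have hpos := hψ.2.2 A hA hψA x
  simpa [iterP_eq_pow_apply _ _ _ hA, pos_iff_ne_zero, ENNReal.tsum_eq_zero] using hpos

section Potential

variable (κ : Kernel X X) (r : ℕ → ℝ≥0∞)

noncomputable def rPotential (C : Set X) (x : X) : ℝ≥0∞ :=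
  ∑' n, r (n + 1) * (κ ^ (n + 1)) x C

def reachSet (C : Set X) (j : ℕ) : Set X :=
  {y | 1 ≤ j * ∑ m ∈ Finset.range j, (κ ^ (m + 1)) y C}

variable {κ r}

lemma measurable_rPotential {C : Set X} (hC : MeasurableSet C) : Measurable (rPotential κ r C) :=
  Measurable.tsum fun _ => measurable_const.mul (Kernel.measurable_coe _ hC)

lemma rPotential_mono {C C' : Set X} (h : C ⊆ C') (x : X) :
    rPotential κ r C x ≤ rPotential κ r C' x :=
  ENNReal.tsum_le_tsum fun n => by gcongr

lemma measurableSet_reachSet {C : Set X} (hC : MeasurableSet C) (j : ℕ) :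
    MeasurableSet (reachSet κ C j) :=
  measurableSet_le measurable_const
    (measurable_const.mul (Finset.measurable_sum _ fun _ _ => Kernel.measurable_coe _ hC))

lemma reachSet_mono (C : Set X) : Monotone (reachSet κ C) := by
  intro j j' hj y hy
  simp only [reachSet, Set.mem_ofPred_eq] at hy ⊢
  exact hy.trans (by gcongr)

lemma exists_forall_ge_mem_reachSet {C : Set X} {y : X} {n : ℕ} (hn : 0 < (κ ^ (n + 1)) y C) :
    ∃ J, ∀ j ≥ J, y ∈ reachSet κ C j := by
  obtain ⟨k, hk⟩ := ENNReal.exists_nat_mul_gt hn.ne' ENNReal.one_ne_top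
  refine ⟨max k (n + 1), fun j hj => reachSet_mono C hj ?_⟩
  calc (1 : ℝ≥0∞) ≤ k * (κ ^ (n + 1)) y C := hk.le
    _ ≤ (max k (n + 1) : ℕ) * ∑ m ∈ Finset.range (max k (n + 1)), (κ ^ (m + 1)) y C := by
        gcongr
        · exact_mod_cast le_max_left k (n + 1)
        · exact Finset.single_le_sum (f := fun m => (κ ^ (m + 1)) y C) (fun _ _ => zero_le)
            (Finset.mem_range.mpr (by omega))

lemma tsum_pow_add_le_rPotential (hr : Monotone r) (C : Set X) (k : ℕ) (x : X) :
    ∑' n, r (n + 1) * (κ ^ (k + (n + 1))) x C ≤ rPotential κ r C x :=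
  calc ∑' n, r (n + 1) * (κ ^ (k + (n + 1))) x C
      ≤ ∑' n, r (k + n + 1) * (κ ^ (k + n + 1)) x C :=
        ENNReal.tsum_le_tsum fun n => by
          rw [← add_assoc]
          exact mul_le_mul_left (hr (by omega)) _
    _ ≤ rPotential κ r C x :=
        ENNReal.tsum_comp_le_tsum_of_injective (add_right_injective k)
          (fun m => r (m + 1) * (κ ^ (m + 1)) x C)

lemma lintegral_rPotential_le (hr : Monotone r) {C : Set X} (hC : MeasurableSet C) (k : ℕ)
    (x : X) : ∫⁻ y, rPotential κ r C y ∂((κ ^ k) x) ≤ rPotential κ r C x := by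
  calc ∫⁻ y, rPotential κ r C y ∂((κ ^ k) x)
      = ∑' n, r (n + 1) * (κ ^ (k + (n + 1))) x C := by
        unfold rPotential
        rw [lintegral_tsum fun _ => ((Kernel.measurable_coe _ hC).const_mul _).aemeasurable]
        refine tsum_congr fun n => ?_
        rw [lintegral_const_mul _ (Kernel.measurable_coe _ hC),
          Kernel.pow_add_apply_eq_lintegral _ _ _ _ hC]
    _ ≤ rPotential κ r C x := tsum_pow_add_le_rPotential hr C k x

lemma measure_rPotential_eq_top_eq_zero {ψ : Measure X} (hψ : IsIrreducibility κ ψ)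
    (hr : Monotone r) {C : Set X} (hC : MeasurableSet C) {x : X} (hx : rPotential κ r C x ≠ ⊤) :
    ψ {y | rPotential κ r C y = ⊤} = 0 := by
  set D := {y | rPotential κ r C y = ⊤}
  have hD : MeasurableSet D := measurable_rPotential hC (measurableSet_singleton ⊤)
  by_contra hψD
  obtain ⟨n, hn⟩ := hψ.exists_pow_succ_apply_pos hD (pos_iff_ne_zero.mpr hψD) x
  refine hx (top_le_iff.mp ?_)
  calc ⊤ = ∫⁻ _ in D, ⊤ ∂((κ ^ (n + 1)) x) := by rw [setLIntegral_const, ENNReal.top_mul hn.ne']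
    _ = ∫⁻ y in D, rPotential κ r C y ∂((κ ^ (n + 1)) x) :=
        setLIntegral_congr_fun hD fun y hy => hy.symm
    _ ≤ ∫⁻ y, rPotential κ r C y ∂((κ ^ (n + 1)) x) := setLIntegral_le_lintegral _ _
    _ ≤ rPotential κ r C x := lintegral_rPotential_le hr hC _ x

lemma pow_apply_reachSet_le {C : Set X} (hC : MeasurableSet C) (j n : ℕ) (x : X) :
    (κ ^ n) x (reachSet κ C j) ≤ j * ∑ m ∈ Finset.range j, (κ ^ (n + (m + 1))) x C := by
  have hmeas : Measurable fun y => ∑ m ∈ Finset.range j, (κ ^ (m + 1)) y C :=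
    Finset.measurable_sum _ fun _ _ => Kernel.measurable_coe _ hC
  calc (κ ^ n) x (reachSet κ C j)
      = ∫⁻ _ in reachSet κ C j, 1 ∂((κ ^ n) x) := (setLIntegral_one _).symm
    _ ≤ ∫⁻ y in reachSet κ C j, j * ∑ m ∈ Finset.range j, (κ ^ (m + 1)) y C ∂((κ ^ n) x) :=
        setLIntegral_mono (measurable_const.mul hmeas) fun y hy => hy
    _ ≤ ∫⁻ y, j * ∑ m ∈ Finset.range j, (κ ^ (m + 1)) y C ∂((κ ^ n) x) :=
        setLIntegral_le_lintegral _ _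
    _ = j * ∑ m ∈ Finset.range j, (κ ^ (n + (m + 1))) x C := by
        rw [lintegral_const_mul _ hmeas, lintegral_finsetSum _ fun _ _ =>
          Kernel.measurable_coe _ hC]
        simp only [Kernel.pow_add_apply_eq_lintegral _ _ _ _ hC]

lemma rPotential_reachSet_le (hr : Monotone r) {C : Set X} (hC : MeasurableSet C) (j : ℕ)
    (x : X) : rPotential κ r (reachSet κ C j) x ≤ j * (j * rPotential κ r C x) := by
  calc rPotential κ r (reachSet κ C j) x
      ≤ ∑' n, r (n + 1) * (j * ∑ m ∈ Finset.range j, (κ ^ (n + 1 + (m + 1))) x C) :=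
        ENNReal.tsum_le_tsum fun n => by gcongr; exact pow_apply_reachSet_le hC j (n + 1) x
    _ = j * ∑ m ∈ Finset.range j, ∑' n, r (n + 1) * (κ ^ (m + 1 + (n + 1))) x C := by
        rw [← Summable.tsum_finsetSum fun _ _ => ENNReal.summable, ← ENNReal.tsum_mul_left]
        refine tsum_congr fun n => ?_
        simp only [Finset.mul_sum, add_comm (n + 1)]
        exact Finset.sum_congr rfl fun m _ => by ring
    _ ≤ j * ∑ _m ∈ Finset.range j, rPotential κ r C x := by
        gcongr with m
        exact tsum_pow_add_le_rPotential hr C (m + 1) x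
    _ = j * (j * rPotential κ r C x) := by simp

end Potential

lemma tsum_iterP_eq_rPotential (P : Kernel X X) (r : ℕ → ℝ≥0) {A : Set X} (hA : MeasurableSet A)
    (x : X) : ∑' n, (r (n + 1) : ℝ≥0∞) * iterP P (n + 1) x A = rPotential P (r ·) A x := by
  simp only [rPotential, iterP_eq_pow_apply _ _ _ hA]

lemma exists_measure_inter_setOf_le_natCast_pos {ψ : Measure X} {A : Set X} (hψA : 0 < ψ A)
    {f : X → ℝ≥0∞} (hf : ∀ x ∈ A, f x < ⊤) : ∃ m : ℕ, 0 < ψ (A ∩ {x | f x ≤ m}) := by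
  refine exists_measure_pos_of_not_measure_iUnion_null fun hnull => hψA.ne' ?_
  refine measure_mono_null (fun x hx => ?_) hnull
  obtain ⟨m, hm⟩ := ENNReal.exists_nat_gt (hf x hx).ne
  exact Set.mem_iUnion.mpr ⟨m, hx, hm.le⟩

section Cover

variable {κ : Kernel X X} {ψ : Measure X} {r : ℕ → ℝ≥0∞}

lemma exists_cover_of_iSup_rPotential_lt_top (hψ : IsIrreducibility κ ψ) (hr : Monotone r)
    {A : Set X} (hA : MeasurableSet A) (hψA : 0 < ψ A) (hbdd : ⨆ x, rPotential κ r A x < ⊤) :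
    ∃ As : ℕ → Set X, (∀ i, MeasurableSet (As i)) ∧ Set.univ = ⋃ i, As i ∧
      ∀ i, ⨆ x, rPotential κ r (As i) x < ⊤ := by
  refine ⟨reachSet κ A, measurableSet_reachSet hA, ?_, fun i => ?_⟩
  · refine (Set.eq_univ_of_forall fun x => Set.mem_iUnion.mpr ?_).symm
    obtain ⟨n, hn⟩ := hψ.exists_pow_succ_apply_pos hA hψA x
    obtain ⟨J, hJ⟩ := exists_forall_ge_mem_reachSet hn
    exact ⟨J, hJ J le_rfl⟩
  · calc ⨆ x, rPotential κ r (reachSet κ A i) x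
        ≤ i * (i * ⨆ x, rPotential κ r A x) := iSup_le fun x =>
          (rPotential_reachSet_le hr hA i x).trans (by gcongr; exact le_iSup (rPotential κ r A) x)
      _ < ⊤ := ENNReal.mul_lt_top (by simp) (ENNReal.mul_lt_top (by simp) hbdd)

lemma exists_cover_of_rPotential_lt_top (hψ : IsIrreducibility κ ψ) (hr : Monotone r)
    {A : Set X} (hA : MeasurableSet A) (hψA : 0 < ψ A) (hfin : ∀ x ∈ A, rPotential κ r A x < ⊤) :
    ∃ (D : Set X) (As : ℕ → Set X), (∀ i, MeasurableSet (As i)) ∧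
      Set.univ = D ∪ ⋃ i, As i ∧ ψ D = 0 ∧ ∀ i, ⨆ x ∈ As i, rPotential κ r (As i) x < ⊤ := by
  obtain ⟨m, hψC⟩ := exists_measure_inter_setOf_le_natCast_pos hψA hfin
  set C := A ∩ {x | rPotential κ r A x ≤ m}
  have hC : MeasurableSet C := hA.inter (measurable_rPotential hA measurableSet_Iic)
  obtain ⟨x₀, hx₀⟩ : C.Nonempty := nonempty_of_measure_ne_zero hψC.ne'
  have hx₀fin : rPotential κ r C x₀ ≠ ⊤ :=
    ((rPotential_mono Set.inter_subset_left x₀).trans_lt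
      (hx₀.2.trans_lt (ENNReal.natCast_lt_top m))).ne
  refine ⟨{x | rPotential κ r C x = ⊤}, fun i => {x | rPotential κ r C x ≤ i} ∩ reachSet κ C i,
    fun i => (measurable_rPotential hC measurableSet_Iic).inter (measurableSet_reachSet hC i),
    ?_, measure_rPotential_eq_top_eq_zero hψ hr hC hx₀fin, fun i => ?_⟩
  · refine (Set.eq_univ_of_forall fun x => ?_).symm
    by_cases hx : rPotential κ r C x = ⊤
    · exact Or.inl hx
    obtain ⟨k, hk⟩ := ENNReal.exists_nat_gt hx
    obtain ⟨n, hn⟩ := hψ.exists_pow_succ_apply_pos hC hψC x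
    obtain ⟨J, hJ⟩ := exists_forall_ge_mem_reachSet hn
    refine Or.inr (Set.mem_iUnion.mpr ⟨max k J, ?_, hJ _ (le_max_right k J)⟩)
    exact hk.le.trans (by exact_mod_cast le_max_left k J)
  · calc ⨆ x ∈ {x | rPotential κ r C x ≤ i} ∩ reachSet κ C i,
          rPotential κ r ({x | rPotential κ r C x ≤ i} ∩ reachSet κ C i) x
        ≤ i * (i * i) := iSup₂_le fun x hx =>
          (rPotential_mono Set.inter_subset_right x).trans
            ((rPotential_reachSet_le hr hC i x).trans (by gcongr; exact hx.1))
      _ < ⊤ := by simp [ENNReal.mul_lt_top]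

end Cover

theorem countable_cover_by_uniformly_r_transient_sets_general
    {X : Type*} [MeasurableSpace X]
    (P : Kernel X X) (ψ : Measure X)
    (hψ : IsMaxIrreducibility P ψ) (r : ℕ → ℝ≥0) (hr : InLambda r) :
    ((∃ A : Set X, InBPlus ψ A ∧
        ∀ x ∈ A, (∑' n, (r (n + 1) : ℝ≥0∞) * iterP P (n + 1) x A) < ⊤) →
      ∃ (D : Set X) (As : ℕ → Set X), Set.univ = D ∪ (⋃ i, As i) ∧ ψ D = 0 ∧
        ∀ i, (⨆ x ∈ As i, ∑' n, (r (n + 1) : ℝ≥0∞) * iterP P (n + 1) x (As i)) < ⊤) ∧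
    ((∃ A : Set X, InBPlus ψ A ∧
        (⨆ x, ∑' n, (r (n + 1) : ℝ≥0∞) * iterP P (n + 1) x A) < ⊤) →
      ∃ As : ℕ → Set X, Set.univ = ⋃ i, As i ∧
        ∀ i, (⨆ x, ∑' n, (r (n + 1) : ℝ≥0∞) * iterP P (n + 1) x (As i)) < ⊤) := by
  have hmono : Monotone fun n => (r n : ℝ≥0∞) := fun _ _ h => ENNReal.coe_le_coe.mpr (hr.1 h)
  constructor
  · rintro ⟨A, ⟨hA, hψA⟩, hfin⟩
    simp only [tsum_iterP_eq_rPotential P r hA] at hfin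
    obtain ⟨D, As, hAs, hcover, hD, hbdd⟩ :=
      exists_cover_of_rPotential_lt_top hψ.1 hmono hA hψA hfin
    refine ⟨D, As, hcover, hD, fun i => ?_⟩
    simpa only [tsum_iterP_eq_rPotential P r (hAs i)] using hbdd i
  · rintro ⟨A, ⟨hA, hψA⟩, hbdd⟩
    simp only [tsum_iterP_eq_rPotential P r hA] at hbdd
    obtain ⟨As, hAs, hcover, hbdd⟩ :=
      exists_cover_of_iSup_rPotential_lt_top hψ.1 hmono hA hψA hbdd
    refine ⟨As, hcover, fun i => ?_⟩
    simpa only [tsum_iterP_eq_rPotential P r (hAs i)] using hbdd i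

theorem countable_cover_by_uniformly_r_transient_sets
    {X : Type*} [MeasurableSpace X] [MeasurableSpace.CountablyGenerated X]
    (P : Kernel X X) (hP : ∀ x, P x Set.univ ≤ 1) (ψ : Measure X)
    (hψ : IsMaxIrreducibility P ψ) (r : ℕ → ℝ≥0) (hr : InLambda r) :
    ((∃ A : Set X, InBPlus ψ A ∧
        ∀ x ∈ A, (∑' n, (r (n + 1) : ℝ≥0∞) * iterP P (n + 1) x A) < ⊤) →
      ∃ (D : Set X) (As : ℕ → Set X), Set.univ = D ∪ (⋃ i, As i) ∧ ψ D = 0 ∧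
        ∀ i, (⨆ x ∈ As i, ∑' n, (r (n + 1) : ℝ≥0∞) * iterP P (n + 1) x (As i)) < ⊤) ∧
    ((∃ A : Set X, InBPlus ψ A ∧
        (⨆ x, ∑' n, (r (n + 1) : ℝ≥0∞) * iterP P (n + 1) x A) < ⊤) →
      ∃ As : ℕ → Set X, Set.univ = ⋃ i, As i ∧
        ∀ i, (⨆ x, ∑' n, (r (n + 1) : ℝ≥0∞) * iterP P (n + 1) x (As i)) < ⊤) :=
  countable_cover_by_uniformly_r_transient_sets_general P ψ hψ r hr

end MarkovTransience
end

section
/- Let A ∈ B+(X) and κ ≥ 1. Suppose there exists a constant ε ∈ (0,1) such that Σ_{n≥1} κ^n F^n(x,A) ≤ ε for all x ∈ A. Then Σ_{n≥1} κ^n P^n(x,A) ≤ ε/(1−ε) for all x ∈ A. -/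
/-!
Decomposing a visit to `A` at time `n + 1` according to the first return time `k + 1 ≤ n + 1`
gives `P^{n+1}(x, A) = ∑_k E_x[P^{n-k}(Φ_{k+1}, A); τ_A = k + 1]`, and the weight `κ^{n+1}`
splits as `κ^{k+1} κ^{n-k}`. Hence if `G_N(y) = ∑_{m ≤ N} κ^m P^m(y, A)` is at most `1 + c` on `A`,
then `G_{N+1}(x) - 1 ≤ (1 + c) ∑_k κ^{k+1} F^{k+1}(x, A) ≤ (1 + c) ε`, which equals
`c = ε / (1 - ε)`. Induction on `N` bounds every partial sum by `c`.
-/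

open MeasureTheory ProbabilityTheory
open scoped ENNReal NNReal Classical

namespace MarkovTransience

variable {X : Type*} [MeasurableSpace X]

/-- `retLIntegral P A n g x = E_x[g(Φ_n); τ_A = n]`, so that `retF P A n x` is the case `g = 1`. -/
noncomputable def retLIntegral (P : Kernel X X) (A : Set X) : ℕ → (X → ℝ≥0∞) → X → ℝ≥0∞
  | 0 => fun _ _ => 0
  | 1 => fun g x => ∫⁻ y in A, g y ∂(P x)
  | n + 2 => fun g x => ∫⁻ y in Aᶜ, retLIntegral P A (n + 1) g y ∂(P x)

lemma measurable_setLIntegral_kernel {α β : Type*} [MeasurableSpace α] [MeasurableSpace β]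
    (κ : Kernel α β) {s : Set β} (hs : MeasurableSet s) {f : β → ℝ≥0∞} (hf : Measurable f) :
    Measurable fun a => ∫⁻ b in s, f b ∂(κ a) := by
  simp_rw [← Kernel.lintegral_restrict κ hs]
  exact hf.lintegral_kernel

section

variable (P : Kernel X X) {A : Set X}

lemma measurable_iterP (hA : MeasurableSet A) (n : ℕ) : Measurable fun x => iterP P n x A := by
  induction n with
  | zero => exact measurable_const.indicator hA
  | succ n ih => exact ih.lintegral_kernel

lemma measurable_retLIntegral (hA : MeasurableSet A) {g : X → ℝ≥0∞} (hg : Measurable g)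
    (n : ℕ) : Measurable (retLIntegral P A (n + 1) g) := by
  induction n with
  | zero => exact measurable_setLIntegral_kernel P hA hg
  | succ n ih => exact measurable_setLIntegral_kernel P hA.compl ih

lemma retLIntegral_one (n : ℕ) (x : X) :
    retLIntegral P A (n + 1) (fun _ => 1) x = retF P A (n + 1) x := by
  induction n generalizing x with
  | zero => exact setLIntegral_one _
  | succ n ih => exact lintegral_congr ih

lemma retLIntegral_mono (hA : MeasurableSet A) {g g' : X → ℝ≥0∞} (h : ∀ y ∈ A, g y ≤ g' y)
    (n : ℕ) (x : X) : retLIntegral P A (n + 1) g x ≤ retLIntegral P A (n + 1) g' x := by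
  induction n generalizing x with
  | zero => exact setLIntegral_mono' hA h
  | succ n ih => exact lintegral_mono ih

lemma retLIntegral_const_mul (hA : MeasurableSet A) (c : ℝ≥0∞) {g : X → ℝ≥0∞}
    (hg : Measurable g) (n : ℕ) (x : X) :
    retLIntegral P A (n + 1) (fun y => c * g y) x = c * retLIntegral P A (n + 1) g x := by
  induction n generalizing x with
  | zero => exact lintegral_const_mul c hg
  | succ n ih =>
    exact (lintegral_congr ih).trans (lintegral_const_mul c (measurable_retLIntegral P hA hg n))

lemma retLIntegral_finset_sum (hA : MeasurableSet A) (s : Finset ℕ) {g : ℕ → X → ℝ≥0∞}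
    (hg : ∀ m, Measurable (g m)) (n : ℕ) (x : X) :
    retLIntegral P A (n + 1) (fun y => ∑ m ∈ s, g m y) x =
      ∑ m ∈ s, retLIntegral P A (n + 1) (g m) x := by
  induction n generalizing x with
  | zero => exact lintegral_finsetSum' s fun m _ => (hg m).aemeasurable
  | succ n ih =>
    exact (lintegral_congr ih).trans
      (lintegral_finsetSum' s fun m _ => (measurable_retLIntegral P hA (hg m) n).aemeasurable)

lemma iterP_succ_eq_sum_retLIntegral (hA : MeasurableSet A) (n : ℕ) (x : X) :
    iterP P (n + 1) x A =
      ∑ k ∈ Finset.range (n + 1), retLIntegral P A (k + 1) (fun y => iterP P (n - k) y A) x := by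
  induction n generalizing x with
  | zero =>
    rw [Finset.sum_range_one]
    change ∫⁻ y, A.indicator 1 y ∂(P x) = ∫⁻ y in A, A.indicator 1 y ∂(P x)
    rw [lintegral_indicator hA, setLIntegral_indicator hA, Set.inter_self]
  | succ n ih =>
    have outside : ∫⁻ y in Aᶜ, iterP P (n + 1) y A ∂(P x) =
        ∑ k ∈ Finset.range (n + 1), retLIntegral P A (k + 2) (fun y => iterP P (n - k) y A) x := by
      rw [lintegral_congr ih]
      exact lintegral_finsetSum' _ fun k _ =>
        (measurable_retLIntegral P hA (measurable_iterP P hA _) k).aemeasurable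
    change ∫⁻ y, iterP P (n + 1) y A ∂(P x) = _
    rw [Finset.sum_range_succ', ← lintegral_add_compl _ hA, outside, add_comm]
    simp only [Nat.add_sub_add_right, Nat.sub_zero]
    rfl

lemma sum_range_pow_mul_iterP_le (hA : MeasurableSet A) (κ : ℝ≥0∞) (N : ℕ) (x : X) :
    ∑ n ∈ Finset.range N, κ ^ (n + 1) * iterP P (n + 1) x A ≤
      ∑ k ∈ Finset.range N, κ ^ (k + 1) *
        retLIntegral P A (k + 1) (fun y => ∑ m ∈ Finset.range N, κ ^ m * iterP P m y A) x := by
  set H : ℕ → ℕ → ℝ≥0∞ := fun k m =>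
    κ ^ (k + 1) * retLIntegral P A (k + 1) (fun y => κ ^ m * iterP P m y A) x
  have hweight : ∀ m, Measurable fun y => κ ^ m * iterP P m y A := fun m =>
    (measurable_iterP P hA m).const_mul _
  calc ∑ n ∈ Finset.range N, κ ^ (n + 1) * iterP P (n + 1) x A
      = ∑ n ∈ Finset.range N, ∑ k ∈ Finset.range (n + 1), H k (n - k) := by
        refine Finset.sum_congr rfl fun n _ => ?_
        rw [iterP_succ_eq_sum_retLIntegral P hA, Finset.mul_sum]
        refine Finset.sum_congr rfl fun k hk => ?_
        have hkn : k + 1 + (n - k) = n + 1 := by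
          have := Finset.mem_range.mp hk
          omega
        simp only [H]
        rw [retLIntegral_const_mul P hA _ (measurable_iterP P hA _), ← mul_assoc, ← pow_add, hkn]
    _ = ∑ k ∈ Finset.range N, ∑ m ∈ Finset.range (N - k), H k m := Finset.sum_range_diag_flip N H
    _ ≤ ∑ k ∈ Finset.range N, ∑ m ∈ Finset.range N, H k m :=
        Finset.sum_le_sum fun k _ =>
          Finset.sum_le_sum_of_subset (Finset.range_subset_range.mpr (Nat.sub_le N k))
    _ = _ := by
        refine Finset.sum_congr rfl fun k _ => ?_
        rw [retLIntegral_finset_sum P hA _ hweight, Finset.mul_sum]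

lemma sum_range_pow_mul_iterP_le_of_tsum_pow_mul_retF_le (hA : MeasurableSet A) (κ : ℝ≥0∞)
    {e c : ℝ≥0∞} (hec : (1 + c) * e ≤ c)
    (h : ∀ x ∈ A, ∑' n, κ ^ (n + 1) * retF P A (n + 1) x ≤ e) (N : ℕ) :
    ∀ x ∈ A, ∑ n ∈ Finset.range N, κ ^ (n + 1) * iterP P (n + 1) x A ≤ c := by
  induction N with
  | zero => simp
  | succ N ih =>
    intro x hx
    set G : X → ℝ≥0∞ := fun y => ∑ m ∈ Finset.range (N + 1), κ ^ m * iterP P m y A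
    have hG : ∀ y ∈ A, G y ≤ 1 + c := by
      intro y hy
      simp only [G, Finset.sum_range_succ', pow_zero, one_mul, iterP,
        Set.indicator_of_mem hy, add_comm _ (1 : ℝ≥0∞)]
      exact add_le_add_right (ih y hy) 1
    have hstep : ∀ k, retLIntegral P A (k + 1) G x ≤ (1 + c) * retF P A (k + 1) x := fun k =>
      calc retLIntegral P A (k + 1) G x
          ≤ retLIntegral P A (k + 1) (fun _ => (1 + c) * 1) x :=
            retLIntegral_mono P hA (fun y hy => by simpa using hG y hy) k x
        _ = (1 + c) * retF P A (k + 1) x := by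
            rw [retLIntegral_const_mul P hA _ measurable_const, retLIntegral_one]
    calc ∑ n ∈ Finset.range (N + 1), κ ^ (n + 1) * iterP P (n + 1) x A
        ≤ ∑ k ∈ Finset.range (N + 1), κ ^ (k + 1) * retLIntegral P A (k + 1) G x :=
          sum_range_pow_mul_iterP_le P hA κ (N + 1) x
      _ ≤ ∑ k ∈ Finset.range (N + 1), (1 + c) * (κ ^ (k + 1) * retF P A (k + 1) x) :=
          Finset.sum_le_sum fun k _ => by
            rw [mul_left_comm]
            exact mul_le_mul_right (hstep k) _
      _ = (1 + c) * ∑ k ∈ Finset.range (N + 1), κ ^ (k + 1) * retF P A (k + 1) x :=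
          (Finset.mul_sum _ _ _).symm
      _ ≤ (1 + c) * e := mul_le_mul_right ((ENNReal.sum_le_tsum _).trans (h x hx)) _
      _ ≤ c := hec

lemma tsum_pow_mul_iterP_le_of_tsum_pow_mul_retF_le (hA : MeasurableSet A) (κ : ℝ≥0∞)
    {e c : ℝ≥0∞} (hec : (1 + c) * e ≤ c)
    (h : ∀ x ∈ A, ∑' n, κ ^ (n + 1) * retF P A (n + 1) x ≤ e) :
    ∀ x ∈ A, ∑' n, κ ^ (n + 1) * iterP P (n + 1) x A ≤ c := fun x hx => by
  rw [ENNReal.tsum_eq_iSup_nat]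
  exact iSup_le fun N =>
    sum_range_pow_mul_iterP_le_of_tsum_pow_mul_retF_le P hA κ hec h N x hx

end

theorem geometric_return_sum_le_of_first_return_sum_le_general
    {X : Type*} [MeasurableSpace X]
    (P : Kernel X X) (ψ : Measure X)
    (A : Set X) (hA : InBPlus ψ A)
    (κ : ℝ≥0) (ε : ℝ) (hε0 : 0 < ε) (hε1 : ε < 1)
    (h : ∀ x ∈ A, (∑' n, (κ : ℝ≥0∞) ^ (n + 1) * retF P A (n + 1) x) ≤ ENNReal.ofReal ε) :
    ∀ x ∈ A, (∑' n, (κ : ℝ≥0∞) ^ (n + 1) * iterP P (n + 1) x A) ≤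
      ENNReal.ofReal (ε / (1 - ε)) := by
  have h1ε : 0 < 1 - ε := by linarith
  have hec : (1 + ENNReal.ofReal (ε / (1 - ε))) * ENNReal.ofReal ε =
      ENNReal.ofReal (ε / (1 - ε)) := by
    rw [← ENNReal.ofReal_one, ← ENNReal.ofReal_add zero_le_one (by positivity),
      ← ENNReal.ofReal_mul (by positivity)]
    congr 1
    field_simp
    ring
  exact tsum_pow_mul_iterP_le_of_tsum_pow_mul_retF_le P hA.1 κ hec.le h

theorem geometric_return_sum_le_of_first_return_sum_le
    {X : Type*} [MeasurableSpace X] [MeasurableSpace.CountablyGenerated X]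
    (P : Kernel X X) (hP : ∀ x, P x Set.univ ≤ 1) (ψ : Measure X)
    (hψ : IsMaxIrreducibility P ψ) (A : Set X) (hA : InBPlus ψ A)
    (κ : ℝ≥0) (hκ : 1 ≤ κ) (ε : ℝ) (hε0 : 0 < ε) (hε1 : ε < 1)
    (h : ∀ x ∈ A, (∑' n, (κ : ℝ≥0∞) ^ (n + 1) * retF P A (n + 1) x) ≤ ENNReal.ofReal ε) :
    ∀ x ∈ A, (∑' n, (κ : ℝ≥0∞) ^ (n + 1) * iterP P (n + 1) x A) ≤
      ENNReal.ofReal (ε / (1 - ε)) :=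
  geometric_return_sum_le_of_first_return_sum_le_general P ψ A hA κ ε hε0 hε1 h

end MarkovTransience
end

section
/- Let r ∈ Λ and set r̂(n) = Σ_{k=0}^{n} r(k). Let A ∈ B+(X). Then the function g*(x) := E_x[r̂(τ_A) 1_{τ_A<∞}] is the minimal nonnegative solution of the equation g(x) = ∫_{A^c} g(y) P(x,dy) + P(x,A) + E_x[r(τ_A) 1_{τ_A<∞}] for x ∈ X; that is, g* satisfies this equation and every nonnegative measurable solution g of the equation satisfies g(x) ≥ g*(x) for all x. -/
open MeasureTheory ProbabilityTheory
open scoped ENNReal NNReal Classical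

namespace MarkovTransience

variable {X : Type*} [MeasurableSpace X]

/-!
Everything rests on the first-step decomposition
`E_x[a(τ_A)] = a(1) P(x, A) + ∫_{Aᶜ} E_y[a(τ_A + 1)] P(x, dy)`: either `τ_A = 1`, or the chain
moves to `y ∈ Aᶜ` and restarts. Applied to `a = r̂`, with `r̂(1) = 1 + r(1)` and
`r̂(n + 1) = r̂(n) + r(n + 1)`, it yields the equation for `g*`. For minimality, the same
computation shows by induction on `N` that any supersolution `g` dominates the `r̂`-moment
restricted to `τ_A < N`; letting `N → ∞` gives `g* ≤ g`.
-/

section ReturnTimeMoments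

variable (P : Kernel X X) {A : Set X}

theorem measurable_retF (hA : MeasurableSet A) : ∀ n, Measurable (retF P A n)
  | 0 => measurable_const
  | 1 => P.measurable_coe hA
  | n + 2 => by
    simpa only [Kernel.lintegral_restrict, retF] using
      (measurable_retF hA (n + 1)).lintegral_kernel (κ := P.restrict hA.compl)

theorem measurable_retE (hA : MeasurableSet A) (a : ℕ → ℝ≥0∞) : Measurable (retE P A a) :=
  Measurable.tsum fun n => (measurable_retF P hA n).const_mul (a n)

theorem retE_add (a b : ℕ → ℝ≥0∞) (x : X) :
    retE P A (fun n => a n + b n) x = retE P A a x + retE P A b x := by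
  simp only [retE, add_mul, ENNReal.tsum_add]

theorem retE_mono {a b : ℕ → ℝ≥0∞} (hab : ∀ n, a n ≤ b n) (x : X) :
    retE P A a x ≤ retE P A b x :=
  ENNReal.tsum_le_tsum fun n => mul_le_mul_left (hab n) _

theorem retE_eq_tsum_succ (a : ℕ → ℝ≥0∞) (x : X) :
    retE P A a x = ∑' n, a (n + 1) * retF P A (n + 1) x := by
  rw [retE, tsum_eq_zero_add' ENNReal.summable]
  simp [retF]

theorem retE_eq_first_step (hA : MeasurableSet A) (a : ℕ → ℝ≥0∞) (x : X) :
    retE P A a x = a 1 * P x A + ∫⁻ y in Aᶜ, retE P A (fun n => a (n + 1)) y ∂(P x) := by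
  simp_rw [retE_eq_tsum_succ P a, retE_eq_tsum_succ P (fun n => a (n + 1))]
  rw [tsum_eq_zero_add' ENNReal.summable,
    lintegral_tsum fun n => ((measurable_retF P hA _).const_mul _).aemeasurable]
  simp_rw [lintegral_const_mul _ (measurable_retF P hA _)]
  rfl

variable (hA : MeasurableSet A) {a : ℕ → ℝ≥0∞} (ha0 : a 0 = 1)
include hA ha0

theorem retE_partialSum_eq (x : X) :
    retE P A (fun n => ∑ k ∈ Finset.range (n + 1), a k) x
      = (∫⁻ y in Aᶜ, retE P A (fun n => ∑ k ∈ Finset.range (n + 1), a k) y ∂(P x))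
        + P x A + retE P A a x := by
  set S := fun n => ∑ k ∈ Finset.range (n + 1), a k
  calc retE P A S x
      = (1 + a 1) * P x A
          + ∫⁻ y in Aᶜ, (retE P A S y + retE P A (fun n => a (n + 1)) y) ∂(P x) := by
        rw [retE_eq_first_step P hA]
        simp_rw [← retE_add, S, Finset.sum_range_succ _ (_ + 1)]
        simp [Finset.sum_range_succ, ha0]
    _ = (∫⁻ y in Aᶜ, retE P A S y ∂(P x)) + P x A
          + (a 1 * P x A + ∫⁻ y in Aᶜ, retE P A (fun n => a (n + 1)) y ∂(P x)) := by
        rw [lintegral_add_left (measurable_retE P hA S)]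
        ring
    _ = (∫⁻ y in Aᶜ, retE P A S y ∂(P x)) + P x A + retE P A a x := by
        rw [← retE_eq_first_step P hA]

theorem retE_truncPartialSum_le {g : X → ℝ≥0∞}
    (hg : ∀ x, (∫⁻ y in Aᶜ, g y ∂(P x)) + P x A + retE P A a x ≤ g x) (N : ℕ) (x : X) :
    retE P A (fun n => if n < N then ∑ k ∈ Finset.range (n + 1), a k else 0) x ≤ g x := by
  induction N generalizing x with
  | zero => simp [retE]
  | succ N ih =>
    set T := fun n => if n < N then ∑ k ∈ Finset.range (n + 1), a k else 0
    calc _ ≤ (1 + a 1) * P x A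
          + ∫⁻ y in Aᶜ, (retE P A T y + retE P A (fun n => a (n + 1)) y) ∂(P x) := by
          rw [retE_eq_first_step P hA]
          gcongr with y
          · split_ifs <;> simp [Finset.sum_range_succ, ha0]
          · rw [← retE_add]
            refine retE_mono P (fun n => ?_) y
            by_cases h : n < N <;> simp [T, h, Finset.sum_range_succ _ (n + 1)]
      _ = (∫⁻ y in Aᶜ, retE P A T y ∂(P x)) + P x A
          + (a 1 * P x A + ∫⁻ y in Aᶜ, retE P A (fun n => a (n + 1)) y ∂(P x)) := by
        rw [lintegral_add_left (measurable_retE P hA T)]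
        ring
      _ ≤ (∫⁻ y in Aᶜ, g y ∂(P x)) + P x A + retE P A a x := by
        rw [← retE_eq_first_step P hA]
        gcongr with y
        exact ih y
      _ ≤ g x := hg x

theorem retE_partialSum_le_of_supersolution {g : X → ℝ≥0∞}
    (hg : ∀ x, (∫⁻ y in Aᶜ, g y ∂(P x)) + P x A + retE P A a x ≤ g x) (x : X) :
    retE P A (fun n => ∑ k ∈ Finset.range (n + 1), a k) x ≤ g x := by
  refine ENNReal.tsum_le_of_sum_range_le fun N => ?_
  calc ∑ n ∈ Finset.range N, (∑ k ∈ Finset.range (n + 1), a k) * retF P A n x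
      = ∑ n ∈ Finset.range N,
          (if n < N then ∑ k ∈ Finset.range (n + 1), a k else 0) * retF P A n x :=
        Finset.sum_congr rfl fun n hn => by rw [if_pos (Finset.mem_range.1 hn)]
    _ ≤ retE P A (fun n => if n < N then ∑ k ∈ Finset.range (n + 1), a k else 0) x :=
        ENNReal.sum_le_tsum _
    _ ≤ g x := retE_truncPartialSum_le P hA ha0 hg N x

end ReturnTimeMoments

theorem minimal_solution_rhat_general
    {X : Type*} [MeasurableSpace X]
    (P : Kernel X X) (ψ : Measure X)
    (r : ℕ → ℝ≥0) (hr : InLambda r)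
    (A : Set X) (hA : InBPlus ψ A) :
    (∀ x, retE P A (fun n => ∑ k ∈ Finset.range (n + 1), (r k : ℝ≥0∞)) x
        = (∫⁻ y in Aᶜ, retE P A (fun n => ∑ k ∈ Finset.range (n + 1), (r k : ℝ≥0∞)) y ∂(P x))
          + P x A + retE P A (fun n => (r n : ℝ≥0∞)) x) ∧
    (∀ g : X → ℝ≥0∞, Measurable g →
      (∀ x, g x = (∫⁻ y in Aᶜ, g y ∂(P x)) + P x A + retE P A (fun n => (r n : ℝ≥0∞)) x) →
      ∀ x, retE P A (fun n => ∑ k ∈ Finset.range (n + 1), (r k : ℝ≥0∞)) x ≤ g x) := by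
  have hr0 : (r 0 : ℝ≥0∞) = 1 := ENNReal.coe_eq_one.2 hr.2.1
  exact ⟨retE_partialSum_eq P hA.1 hr0, fun g _ hg =>
    retE_partialSum_le_of_supersolution P hA.1 hr0 fun x => (hg x).ge⟩

theorem minimal_solution_rhat
    {X : Type*} [MeasurableSpace X] [MeasurableSpace.CountablyGenerated X]
    (P : Kernel X X) (hP : ∀ x, P x Set.univ ≤ 1) (ψ : Measure X)
    (hψ : IsMaxIrreducibility P ψ) (r : ℕ → ℝ≥0) (hr : InLambda r)
    (A : Set X) (hA : InBPlus ψ A) :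
    (∀ x, retE P A (fun n => ∑ k ∈ Finset.range (n + 1), (r k : ℝ≥0∞)) x
        = (∫⁻ y in Aᶜ, retE P A (fun n => ∑ k ∈ Finset.range (n + 1), (r k : ℝ≥0∞)) y ∂(P x))
          + P x A + retE P A (fun n => (r n : ℝ≥0∞)) x) ∧
    (∀ g : X → ℝ≥0∞, Measurable g →
      (∀ x, g x = (∫⁻ y in Aᶜ, g y ∂(P x)) + P x A + retE P A (fun n => (r n : ℝ≥0∞)) x) →
      ∀ x, retE P A (fun n => ∑ k ∈ Finset.range (n + 1), (r k : ℝ≥0∞)) x ≤ g x) :=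
  minimal_solution_rhat_general P ψ r hr A hA

end MarkovTransience
end

section
/- Assume Φ is ψ-irreducible with (possibly sub-stochastic) transition kernel P, and P_x(τ < ∞) = 1 for all x ∈ X. Then the following are equivalent. (1) Φ is strongly geometric transient, i.e. there exists κ > 1 such that Σ_{n≥1} κ^n P^n(x,X) < ∞ for every x ∈ X. (2) There exists κ > 1 such that E_x[κ^τ] < ∞ for every x ∈ X. (3) There exist a constant λ ∈ (0,1) and a finite function W ≥ 1 such that PW(x) ≤ λ W(x) for all x ∈ X. -/
open MeasureTheory ProbabilityTheory
open scoped ENNReal NNReal Classical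

namespace MarkovTransience

variable {X : Type*} [MeasurableSpace X]

/-!
All three conditions amount to the finiteness of `W(x) = ∑ₙ κⁿ Pⁿ(x, X)` for some `κ > 1`.
This `W` lies between `E_x[κ^τ]` and `(1 - κ⁻¹)⁻¹ E_x[κ^τ]`, it satisfies `W = 1 + κ PW`, so
`PW ≤ κ⁻¹ W`, and conversely a drift `PV ≤ λ V` with `V ≥ 1` gives `Pⁿ(x, X) ≤ λⁿ V(x)`, hence
`W ≤ (1 - κλ)⁻¹ V` whenever `κλ < 1`.
-/

section GeometricPotential

variable (P : Kernel X X)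

lemma iterP_zero_univ (x : X) : iterP P 0 x Set.univ = 1 := by
  simp [iterP]

lemma measurable_iterP_univ (n : ℕ) : Measurable (fun x => iterP P n x Set.univ) := by
  induction n with
  | zero => simp [iterP]
  | succ n ih => exact (Measure.measurable_lintegral ih).comp P.measurable

lemma iterP_univ_le_one (hP : ∀ x, P x Set.univ ≤ 1) (n : ℕ) (x : X) :
    iterP P n x Set.univ ≤ 1 := by
  induction n generalizing x with
  | zero => simp [iterP]
  | succ n ih =>
    calc iterP P (n + 1) x Set.univ ≤ ∫⁻ _, 1 ∂(P x) := lintegral_mono ih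
      _ ≤ 1 := by simpa using hP x

lemma iterP_univ_succ_le (hP : ∀ x, P x Set.univ ≤ 1) (n : ℕ) (x : X) :
    iterP P (n + 1) x Set.univ ≤ iterP P n x Set.univ := by
  induction n generalizing x with
  | zero => simpa [iterP_zero_univ] using iterP_univ_le_one P hP 1 x
  | succ n ih => exact lintegral_mono ih

lemma sum_range_lifeDist (hP : ∀ x, P x Set.univ ≤ 1) (x : X) (n : ℕ) :
    ∑ m ∈ Finset.range n, lifeDist P x m = 1 - iterP P n x Set.univ := by
  induction n with
  | zero => simp [iterP_zero_univ]
  | succ n ih =>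
    rw [Finset.sum_range_succ, ih, lifeDist]
    exact tsub_add_tsub_cancel (iterP_univ_le_one P hP n x) (iterP_univ_succ_le P hP n x)

lemma tsum_lifeDist_add (hP : ∀ x, P x Set.univ ≤ 1) {x : X}
    (hx : ∑' n, lifeDist P x n = 1) (n : ℕ) :
    ∑' m, lifeDist P x (m + n) = iterP P n x Set.univ := by
  have hsplit := ENNReal.summable.sum_add_tsum_nat_add' (f := lifeDist P x) (k := n)
  rw [hx, sum_range_lifeDist P hP x n, add_comm] at hsplit
  rw [ENNReal.eq_sub_of_add_eq (ne_top_of_le_ne_top ENNReal.one_ne_top tsub_le_self) hsplit,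
    ENNReal.sub_sub_cancel ENNReal.one_ne_top (iterP_univ_le_one P hP n x)]

/-- The drift function of a strongly geometrically transient chain. -/
noncomputable def geomPotential (r : ℝ≥0∞) (x : X) : ℝ≥0∞ :=
  ∑' n, r ^ n * iterP P n x Set.univ

lemma measurable_geomPotential (r : ℝ≥0∞) : Measurable (geomPotential P r) :=
  Measurable.tsum fun n => (measurable_iterP_univ P n).const_mul _

lemma geomPotential_eq_one_add (r : ℝ≥0∞) (x : X) :
    geomPotential P r x = 1 + ∑' n, r ^ (n + 1) * iterP P (n + 1) x Set.univ := by
  rw [geomPotential, tsum_eq_zero_add' ENNReal.summable, pow_zero, iterP_zero_univ, one_mul]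

lemma geomPotential_eq_one_add_mul_act (r : ℝ≥0∞) (x : X) :
    geomPotential P r x = 1 + r * act P (geomPotential P r) x := by
  rw [geomPotential_eq_one_add, act]
  unfold geomPotential
  rw [lintegral_tsum fun n => ((measurable_iterP_univ P n).const_mul _).aemeasurable,
    ← ENNReal.tsum_mul_left]
  congr 1
  refine tsum_congr fun n => ?_
  rw [lintegral_const_mul _ (measurable_iterP_univ P n), pow_succ', mul_assoc]
  rfl

lemma act_geomPotential_le {r : ℝ≥0∞} (hr0 : r ≠ 0) (hrt : r ≠ ⊤) (x : X) :
    act P (geomPotential P r) x ≤ r⁻¹ * geomPotential P r x :=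
  (ENNReal.mul_le_iff_le_inv hr0 hrt).1 <| by
    rw [geomPotential_eq_one_add_mul_act P r x]
    exact le_add_self

lemma lifeE_le_geomPotential (r : ℝ≥0∞) (x : X) :
    lifeE P (r ^ ·) x ≤ geomPotential P r x :=
  ENNReal.tsum_le_tsum fun _ => mul_le_mul_right tsub_le_self _

/-- Each `p k` is counted with weight `∑_{n ≤ k} rⁿ ≤ rᵏ (1 - r⁻¹)⁻¹`. -/
lemma _root_.ENNReal.tsum_pow_mul_tsum_add_le (p : ℕ → ℝ≥0∞) {r : ℝ≥0∞} (hr0 : r ≠ 0)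
    (hrt : r ≠ ⊤) :
    ∑' n, r ^ n * ∑' m, p (m + n) ≤ (1 - r⁻¹)⁻¹ * ∑' k, r ^ k * p k := by
  set g : ℕ → ℝ≥0∞ := fun k => r ^ k * p k
  calc ∑' n, r ^ n * ∑' m, p (m + n) = ∑' n, ∑' m, r⁻¹ ^ m * g (m + n) := by
        refine tsum_congr fun n => ?_
        rw [← ENNReal.tsum_mul_left]
        refine tsum_congr fun m => ?_
        show _ = _ * (r ^ (m + n) * _)
        rw [← mul_assoc, pow_add, ← mul_assoc, ← mul_pow, ENNReal.inv_mul_cancel hr0 hrt, one_pow,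
          one_mul]
    _ = ∑' m, r⁻¹ ^ m * ∑' n, g (m + n) := by
        rw [ENNReal.tsum_comm]
        simp only [ENNReal.tsum_mul_left]
    _ ≤ ∑' m, r⁻¹ ^ m * ∑' k, g k := ENNReal.tsum_le_tsum fun m =>
        mul_le_mul_right (ENNReal.tsum_comp_le_tsum_of_injective (add_right_injective m) g) _
    _ = (1 - r⁻¹)⁻¹ * ∑' k, g k := by rw [ENNReal.tsum_mul_right, ENNReal.tsum_geometric]

lemma geomPotential_le_mul_lifeE (hP : ∀ x, P x Set.univ ≤ 1) {x : X}
    (hx : ∑' n, lifeDist P x n = 1) {r : ℝ≥0∞} (hr0 : r ≠ 0) (hrt : r ≠ ⊤) :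
    geomPotential P r x ≤ (1 - r⁻¹)⁻¹ * lifeE P (r ^ ·) x := by
  simpa only [geomPotential, lifeE, tsum_lifeDist_add P hP hx] using
    ENNReal.tsum_pow_mul_tsum_add_le (lifeDist P x) hr0 hrt

lemma iterP_univ_le_pow_mul_of_drift {W : X → ℝ≥0∞} {lam : ℝ≥0∞} (hWm : Measurable W)
    (hW1 : ∀ x, 1 ≤ W x) (hdrift : ∀ x, act P W x ≤ lam * W x) (n : ℕ) (x : X) :
    iterP P n x Set.univ ≤ lam ^ n * W x := by
  induction n generalizing x with
  | zero => simpa [iterP_zero_univ] using hW1 x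
  | succ n ih =>
    calc iterP P (n + 1) x Set.univ ≤ ∫⁻ y, lam ^ n * W y ∂(P x) := lintegral_mono ih
      _ = lam ^ n * act P W x := lintegral_const_mul _ hWm
      _ ≤ lam ^ n * (lam * W x) := by gcongr; exact hdrift x
      _ = lam ^ (n + 1) * W x := by rw [pow_succ, mul_assoc]

lemma geomPotential_le_of_drift {W : X → ℝ≥0∞} {lam : ℝ≥0∞} (hWm : Measurable W)
    (hW1 : ∀ x, 1 ≤ W x) (hdrift : ∀ x, act P W x ≤ lam * W x) (r : ℝ≥0∞) (x : X) :
    geomPotential P r x ≤ (1 - r * lam)⁻¹ * W x :=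
  calc geomPotential P r x ≤ ∑' n, (r * lam) ^ n * W x := ENNReal.tsum_le_tsum fun n => by
        rw [mul_pow, mul_assoc]
        gcongr
        exact iterP_univ_le_pow_mul_of_drift P hWm hW1 hdrift n x
    _ = (1 - r * lam)⁻¹ * W x := by rw [ENNReal.tsum_mul_right, ENNReal.tsum_geometric]

end GeometricPotential

lemma _root_.ENNReal.exists_one_lt_mul_lt_one {lam : ℝ≥0∞} (hlam : lam < 1) :
    ∃ κ : ℝ≥0, 1 < κ ∧ (κ : ℝ≥0∞) * lam < 1 := by
  lift lam to ℝ≥0 using hlam.ne_top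
  obtain ⟨t, hlt, ht1⟩ := exists_between (ENNReal.coe_lt_one_iff.1 hlam)
  have ht0 : t ≠ 0 := (hlt.trans_le' zero_le).ne'
  refine ⟨t⁻¹, (one_lt_inv₀ (pos_iff_ne_zero.2 ht0)).2 ht1, ?_⟩
  rw [← ENNReal.coe_mul, ENNReal.coe_lt_one_iff]
  calc t⁻¹ * lam < t⁻¹ * t := by gcongr
    _ = 1 := inv_mul_cancel₀ ht0

theorem stronglyGeomTransient_tfae_general
    {X : Type*} [MeasurableSpace X]
    (P : Kernel X X) (hP : ∀ x, P x Set.univ ≤ 1)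
    (hlife : ∀ x, (∑' n, lifeDist P x n) = 1) :
    [(∃ κ : ℝ≥0, 1 < κ ∧
        ∀ x, (∑' n, (κ : ℝ≥0∞) ^ (n + 1) * iterP P (n + 1) x Set.univ) < ⊤),
     (∃ κ : ℝ≥0, 1 < κ ∧ ∀ x, lifeE P (fun n => (κ : ℝ≥0∞) ^ n) x < ⊤),
     (∃ lam : ℝ≥0∞, 0 < lam ∧ lam < 1 ∧ ∃ W : X → ℝ≥0∞, Measurable W ∧
        (∀ x, 1 ≤ W x) ∧ (∀ x, W x < ⊤) ∧ ∀ x, act P W x ≤ lam * W x)].TFAE := by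
  have hpot (κ : ℝ≥0∞) (x : X) :
      ∑' n, κ ^ (n + 1) * iterP P (n + 1) x Set.univ < ⊤ ↔ geomPotential P κ x < ⊤ := by
    simp [geomPotential_eq_one_add, ENNReal.add_lt_top]
  simp only [hpot]
  have hκ0 {κ : ℝ≥0} (hκ : 1 < κ) : (κ : ℝ≥0∞) ≠ 0 := by positivity
  tfae_have 1 → 2
  | ⟨κ, hκ, h⟩ => ⟨κ, hκ, fun x => (lifeE_le_geomPotential P κ x).trans_lt (h x)⟩
  tfae_have 2 → 1
  | ⟨κ, hκ, h⟩ => ⟨κ, hκ, fun x =>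
    (geomPotential_le_mul_lifeE P hP (hlife x) (hκ0 hκ) ENNReal.coe_ne_top).trans_lt <|
      ENNReal.mul_lt_top (by simpa [tsub_pos_iff_lt] using hκ) (h x)⟩
  tfae_have 1 → 3
  | ⟨κ, hκ, h⟩ => ⟨(κ : ℝ≥0∞)⁻¹, ENNReal.inv_pos.2 ENNReal.coe_ne_top,
    ENNReal.inv_lt_one.2 (by exact_mod_cast hκ), geomPotential P κ, measurable_geomPotential P κ,
    fun x => (geomPotential_eq_one_add_mul_act P κ x).symm ▸ le_self_add, h,
    act_geomPotential_le P (hκ0 hκ) ENNReal.coe_ne_top⟩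
  tfae_have 3 → 1
  | ⟨lam, _, hlam, W, hWm, hW1, hWt, hdrift⟩ => by
    obtain ⟨κ, hκ, hκlam⟩ := ENNReal.exists_one_lt_mul_lt_one hlam
    exact ⟨κ, hκ, fun x => (geomPotential_le_of_drift P hWm hW1 hdrift κ x).trans_lt <|
      ENNReal.mul_lt_top (by simpa [tsub_pos_iff_lt] using hκlam) (hWt x)⟩
  tfae_finish

theorem stronglyGeomTransient_tfae
    {X : Type*} [MeasurableSpace X] [MeasurableSpace.CountablyGenerated X]
    (P : Kernel X X) (hP : ∀ x, P x Set.univ ≤ 1) (ψ : Measure X)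
    (hψ : IsIrreducibility P ψ) (hlife : ∀ x, (∑' n, lifeDist P x n) = 1) :
    [(∃ κ : ℝ≥0, 1 < κ ∧
        ∀ x, (∑' n, (κ : ℝ≥0∞) ^ (n + 1) * iterP P (n + 1) x Set.univ) < ⊤),
     (∃ κ : ℝ≥0, 1 < κ ∧ ∀ x, lifeE P (fun n => (κ : ℝ≥0∞) ^ n) x < ⊤),
     (∃ lam : ℝ≥0∞, 0 < lam ∧ lam < 1 ∧ ∃ W : X → ℝ≥0∞, Measurable W ∧
        (∀ x, 1 ≤ W x) ∧ (∀ x, W x < ⊤) ∧ ∀ x, act P W x ≤ lam * W x)].TFAE :=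
  stronglyGeomTransient_tfae_general P hP hlife

end MarkovTransience
end

section
/- Suppose there exist a set A ∈ B+(X), constants d ∈ [0,∞) and α ∈ (0,1), and a function V ≥ 1 satisfying PV(x) ≤ V(x) − d V^α(x) for all x ∈ A^c. Then for every 0 < η ≤ 1, P V^η(x) ≤ V^η(x) − η d V^{α+η−1}(x) for all x ∈ A^c. -/
open MeasureTheory ProbabilityTheory
open scoped ENNReal NNReal Classical

/-! The tangent-line (weighted AM–GM) bound for the concave map `t ↦ t ^ η`,
`u ^ η ≤ η v ^ (η - 1) u + (1 - η) v ^ η` for `u ≥ 0`, `v > 0`, integrated against the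
sub-probability `P(x, ·)` with `v = V x`, gives
`PV^η(x) ≤ η V(x)^(η-1) PV(x) + (1 - η) V(x)^η`. Inserting the drift bound
`PV(x) + d V(x)^α ≤ V(x)` turns the right-hand side into `V(x)^η - η d V(x)^(α+η-1)`. -/

namespace MarkovTransience

variable {X : Type*} [MeasurableSpace X]

theorem _root_.Real.rpow_le_mul_rpow_sub_one_mul_add {u v η : ℝ} (hu : 0 ≤ u) (hv : 0 < v)
    (hη0 : 0 ≤ η) (hη1 : η ≤ 1) :
    u ^ η ≤ η * v ^ (η - 1) * u + (1 - η) * v ^ η := by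
  have amgm : u ^ η * v ^ (1 - η) ≤ η * u + (1 - η) * v :=
    Real.geom_mean_le_arith_mean2_weighted hη0 (sub_nonneg.2 hη1) hu hv.le (by ring)
  calc u ^ η = u ^ η * v ^ (1 - η) * v ^ (η - 1) := by
        rw [mul_assoc, ← Real.rpow_add hv]; simp
    _ ≤ (η * u + (1 - η) * v) * v ^ (η - 1) := by gcongr
    _ = η * v ^ (η - 1) * u + (1 - η) * v ^ η := by
        rw [Real.rpow_sub_one hv.ne']; field_simp

theorem _root_.ENNReal.rpow_le_mul_rpow_sub_one_mul_add {u v : ℝ≥0∞} {η : ℝ} (hv0 : v ≠ 0)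
    (hv : v ≠ ⊤) (hη0 : 0 ≤ η) (hη1 : η ≤ 1) :
    u ^ η ≤ ENNReal.ofReal η * v ^ (η - 1) * u + ENNReal.ofReal (1 - η) * v ^ η := by
  rcases eq_or_ne u ⊤ with rfl | hu
  · rcases hη0.eq_or_lt with rfl | hη0
    · simp
    · rw [ENNReal.mul_top (by positivity)]; exact le_add_right le_top
  lift u to ℝ≥0 using hu
  lift v to ℝ≥0 using hv
  replace hv0 : v ≠ 0 := by exact_mod_cast hv0
  rw [← ENNReal.coe_rpow_of_ne_zero hv0, ← ENNReal.coe_rpow_of_ne_zero hv0,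
    ← ENNReal.coe_rpow_of_nonneg _ hη0, ENNReal.ofReal, ENNReal.ofReal]
  norm_cast
  rw [← NNReal.coe_le_coe]
  push_cast [Real.coe_toNNReal _ hη0, Real.coe_toNNReal _ (sub_nonneg.2 hη1)]
  exact Real.rpow_le_mul_rpow_sub_one_mul_add u.2 (NNReal.coe_pos.2 (pos_iff_ne_zero.2 hv0))
    hη0 hη1

theorem _root_.MeasureTheory.lintegral_rpow_le_mul_lintegral_add {Ω : Type*} [MeasurableSpace Ω]
    (μ : Measure Ω) (f : Ω → ℝ≥0∞) {v : ℝ≥0∞} {η : ℝ} (hv0 : v ≠ 0) (hv : v ≠ ⊤)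
    (hη0 : 0 ≤ η) (hη1 : η ≤ 1) :
    ∫⁻ x, f x ^ η ∂μ ≤ ENNReal.ofReal η * v ^ (η - 1) * ∫⁻ x, f x ∂μ
      + ENNReal.ofReal (1 - η) * v ^ η * μ Set.univ :=
  calc ∫⁻ x, f x ^ η ∂μ
      ≤ ∫⁻ x, (ENNReal.ofReal η * v ^ (η - 1) * f x + ENNReal.ofReal (1 - η) * v ^ η) ∂μ :=
        lintegral_mono fun _ => ENNReal.rpow_le_mul_rpow_sub_one_mul_add hv0 hv hη0 hη1
    _ = _ := by
        rw [lintegral_add_right' _ aemeasurable_const, lintegral_const,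
          lintegral_const_mul' _ _ (by finiteness)]

theorem drift_power_of_drift_general
    {X : Type*} [MeasurableSpace X]
    (P : Kernel X X) (hP : ∀ x, P x Set.univ ≤ 1) (A : Set X)
    (d : ℝ≥0) (α : ℝ)
    (V : X → ℝ≥0∞) (hV1 : ∀ x, 1 ≤ V x)
    (hdrift : ∀ x ∉ A, act P V x + (d : ℝ≥0∞) * V x ^ α ≤ V x) :
    ∀ η : ℝ, 0 < η → η ≤ 1 →
      ∀ x ∉ A, act P (fun y => V y ^ η) x
        + ENNReal.ofReal η * (d : ℝ≥0∞) * V x ^ (α + η - 1) ≤ V x ^ η := by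
  intro η hη0 hη1 x hx
  set v := V x
  have hv0 : v ≠ 0 := (zero_lt_one.trans_le (hV1 x)).ne'
  rcases eq_or_ne v ⊤ with hv | hv
  · simp [hv, ENNReal.top_rpow_of_pos hη0]
  have hpow : v ^ (η - 1) * v = v ^ η := by
    nth_rewrite 2 [← ENNReal.rpow_one v]
    rw [← ENNReal.rpow_add _ _ hv0 hv, sub_add_cancel]
  have hweights : ENNReal.ofReal η + ENNReal.ofReal (1 - η) = 1 := by
    rw [← ENNReal.ofReal_add hη0.le (sub_nonneg.2 hη1), add_sub_cancel, ENNReal.ofReal_one]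
  calc act P (fun y => V y ^ η) x + ENNReal.ofReal η * d * v ^ (α + η - 1)
      ≤ ENNReal.ofReal η * v ^ (η - 1) * act P V x
          + ENNReal.ofReal (1 - η) * v ^ η * P x Set.univ
          + ENNReal.ofReal η * d * v ^ (α + η - 1) := by
        gcongr
        exact lintegral_rpow_le_mul_lintegral_add (P x) V hv0 hv hη0.le hη1
    _ = ENNReal.ofReal η * v ^ (η - 1) * (act P V x + d * v ^ α)
          + ENNReal.ofReal (1 - η) * v ^ η * P x Set.univ := by
        rw [show α + η - 1 = (η - 1) + α by ring, ENNReal.rpow_add _ _ hv0 hv]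
        ring
    _ ≤ ENNReal.ofReal η * v ^ (η - 1) * v + ENNReal.ofReal (1 - η) * v ^ η * 1 := by
        gcongr
        exacts [hdrift x hx, hP x]
    _ = v ^ η := by
        rw [mul_assoc, hpow, mul_one, ← add_mul, hweights, one_mul]

theorem drift_power_of_drift
    {X : Type*} [MeasurableSpace X] [MeasurableSpace.CountablyGenerated X]
    (P : Kernel X X) (hP : ∀ x, P x Set.univ ≤ 1) (ψ : Measure X)
    (hψ : IsMaxIrreducibility P ψ) (A : Set X) (hA : InBPlus ψ A)
    (d : ℝ≥0) (α : ℝ) (hα0 : 0 < α) (hα1 : α < 1)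
    (V : X → ℝ≥0∞) (hV : Measurable V) (hV1 : ∀ x, 1 ≤ V x)
    (hdrift : ∀ x ∉ A, act P V x + (d : ℝ≥0∞) * V x ^ α ≤ V x) :
    ∀ η : ℝ, 0 < η → η ≤ 1 →
      ∀ x ∉ A, act P (fun y => V y ^ η) x
        + ENNReal.ofReal η * (d : ℝ≥0∞) * V x ^ (α + η - 1) ≤ V x ^ η :=
  drift_power_of_drift_general P hP A d α V hV1 hdrift

end MarkovTransience
end
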